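/- For every n ≥ 1, H(Bin(n,e)) ≥ H(Bin(n−1, 1/2)) − 1, where Bin(n,e) is a Binomial(n,1/2) random variable conditioned to be even and Bin(n−1,1/2) is a binomial random variable with n−1 trials and success probability 1/2. -/
import Mathlib


open Finset

/-- Shannon entropy (base 2) of `Bin(n, e)`, a `Binomial(n, 1/2)` random variable
conditioned to be even: it takes each even value `k ∈ {0, …, n}` with probability
`(n.choose k) / 2 ^ (n-1)` and each odd value with probability `0`. -/
noncomputable def binEvenEntropy (n : ℕ) : ℝ :=
  -∑ k ∈ Finset.range (n + 1),
      (if Even k then (n.choose k : ℝ) / 2 ^ (n - 1) else 0) *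
        Real.logb 2 (if Even k then (n.choose k : ℝ) / 2 ^ (n - 1) else 0)

/-- Shannon entropy (base 2) of a `Binomial(m, 1/2)` random variable, which takes each
value `k ∈ {0, …, m}` with probability `(m.choose k) / 2 ^ m`. -/
noncomputable def binomialEntropy (m : ℕ) : ℝ :=
  -∑ k ∈ Finset.range (m + 1),
      ((m.choose k : ℝ) / 2 ^ m) * Real.logb 2 ((m.choose k : ℝ) / 2 ^ m)

private lemma key_ineq (a b : ℝ) (ha : 0 ≤ a) (hb : 0 ≤ b) :
    (a + b) * Real.logb 2 (a + b) ≤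
      (a * Real.logb 2 a + a) + (b * Real.logb 2 b + b) := by
  rcases ha.eq_or_lt with rfl | ha
  · simp; linarith
  rcases hb.eq_or_lt with rfl | hb
  · simp; linarith
  have hab : (0:ℝ) < a + b := by linarith
  have hl2 : (0:ℝ) < Real.log 2 := Real.log_pos one_lt_two
  have h1 : Real.log ((a + b) / (2 * a)) ≤ (a + b) / (2 * a) - 1 :=
    Real.log_le_sub_one_of_pos (by positivity)
  have h2 : Real.log ((a + b) / (2 * b)) ≤ (a + b) / (2 * b) - 1 :=
    Real.log_le_sub_one_of_pos (by positivity)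
  have e1 : Real.log ((a + b) / (2 * a)) = Real.log (a + b) - (Real.log 2 + Real.log a) := by
    rw [Real.log_div hab.ne' (by positivity), Real.log_mul two_ne_zero ha.ne']
  have e2 : Real.log ((a + b) / (2 * b)) = Real.log (a + b) - (Real.log 2 + Real.log b) := by
    rw [Real.log_div hab.ne' (by positivity), Real.log_mul two_ne_zero hb.ne']
  have c1 : a * ((a + b) / (2 * a) - 1) = (b - a) / 2 := by field_simp; ring
  have c2 : b * ((a + b) / (2 * b) - 1) = (a - b) / 2 := by field_simp; ring
  have m1 : a * (Real.log (a + b) - (Real.log 2 + Real.log a)) ≤ (b - a) / 2 := by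
    rw [← e1, ← c1]
    exact mul_le_mul_of_nonneg_left h1 ha.le
  have m2 : b * (Real.log (a + b) - (Real.log 2 + Real.log b)) ≤ (a - b) / 2 := by
    rw [← e2, ← c2]
    exact mul_le_mul_of_nonneg_left h2 hb.le
  have final : (a + b) * Real.log (a + b) ≤
      a * Real.log a + b * Real.log b + (a + b) * Real.log 2 := by nlinarith
  have final2 : ((a + b) * Real.log (a + b)) / Real.log 2 ≤
      (a * Real.log a + b * Real.log b + (a + b) * Real.log 2) / Real.log 2 :=
    (div_le_div_iff_of_pos_right hl2).mpr final
  calc (a + b) * Real.logb 2 (a + b)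
      = ((a + b) * Real.log (a + b)) / Real.log 2 := by rw [Real.logb]; ring
    _ ≤ (a * Real.log a + b * Real.log b + (a + b) * Real.log 2) / Real.log 2 := final2
    _ = (a * Real.logb 2 a + a) + (b * Real.logb 2 b + b) := by
        rw [Real.logb, Real.logb]; field_simp; ring

/-- For every `n ≥ 1`, `H(Bin(n, e)) ≥ H(Bin(n-1, 1/2)) - 1`, where `Bin(n, e)` is a
`Binomial(n, 1/2)` random variable conditioned to be even. -/
theorem binEvenEntropy_ge (n : ℕ) (hn : 1 ≤ n) :
    binEvenEntropy n ≥ binomialEntropy (n - 1) - 1 := by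
  obtain ⟨m, rfl⟩ : ∃ m, n = m + 1 := ⟨n - 1, (Nat.succ_pred_eq_of_pos hn).symm⟩
  set a : ℕ → ℝ := fun k => (m.choose k : ℝ) / 2 ^ m with ha_def
  set h : ℕ → ℝ := fun k => a k * Real.logb 2 (a k) + a k with hh_def
  have ha0 : ∀ k, 0 ≤ a k := fun k => by positivity
  have hsum : ∑ k ∈ range (m + 1), a k = 1 := by
    rw [ha_def]
    rw [← Finset.sum_div, div_eq_one_iff_eq (by positivity)]
    rw [← Nat.cast_sum, Nat.sum_range_choose]
    push_cast; ring
  have hstep : ∀ k ∈ range (m + 2),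
      (if Even k then ((m+1).choose k : ℝ) / 2 ^ ((m+1) - 1) else 0) *
        Real.logb 2 (if Even k then ((m+1).choose k : ℝ) / 2 ^ ((m+1) - 1) else 0)
      ≤ (if Even k then (if k = 0 then 0 else h (k-1)) + h k else 0) := by
    intro k _
    by_cases hk : Even k
    · simp only [hk, if_true]
      cases k with
      | zero =>
        have h0 : (0:ℝ) ≤ a 0 := ha0 0
        have : ((m+1).choose 0 : ℝ) / 2 ^ ((m+1) - 1) = a 0 := by
          simp [ha_def]
        rw [this]
        norm_num [hh_def]
        nlinarith [ha0 0]
      | succ j =>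
        have hch : (((m+1).choose (j+1) : ℝ)) / 2 ^ ((m+1) - 1) = a j + a (j+1) := by
          rw [Nat.choose_succ_succ]
          push_cast
          rw [ha_def]
          simp [add_div]
        rw [hch]
        have := key_ineq (a j) (a (j+1)) (ha0 j) (ha0 (j+1))
        simp only [Nat.succ_ne_zero, if_false, Nat.add_sub_cancel, hh_def]
        exact this
    · simp [hk]
  have hmain := Finset.sum_le_sum hstep
  have hsplit : ∑ k ∈ range (m + 1 + 1), (if Even k then (if k = 0 then (0:ℝ) else h (k-1)) + h k else 0)
      = ∑ k ∈ range (m + 1 + 1), ((if Even k then (if k = 0 then (0:ℝ) else h (k-1)) else 0)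
          + (if Even k then h k else 0)) := by
    apply Finset.sum_congr rfl
    intro k _
    by_cases hk : Even k <;> simp [hk]
  have hS1 : ∑ k ∈ range (m + 1 + 1), (if Even k then (if k = 0 then (0:ℝ) else h (k-1)) else 0)
      = ∑ i ∈ range (m+1), (if Even (i+1) then h i else 0) := by
    rw [Finset.sum_range_succ']
    simp
  have hhm1 : h (m+1) = 0 := by
    have : m.choose (m+1) = 0 := Nat.choose_eq_zero_of_lt (Nat.lt_succ_self m)
    simp [hh_def, ha_def, this]
  have hS2 : ∑ k ∈ range (m + 1 + 1), (if Even k then h k else 0)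
      = ∑ k ∈ range (m+1), (if Even k then h k else 0) := by
    rw [Finset.sum_range_succ, hhm1]
    simp
  have hcomb : ∑ i ∈ range (m+1), ((if Even (i+1) then h i else 0) + (if Even i then h i else 0))
      = ∑ i ∈ range (m+1), h i := by
    apply Finset.sum_congr rfl
    intro i _
    rcases Nat.even_or_odd i with hi | hi
    · simp [hi, Nat.even_add_one, Nat.not_even_iff_odd.mpr]
    · have h1 : ¬ Even i := Nat.not_even_iff_odd.mpr hi
      have h2 : Even (i+1) := Nat.even_add_one.mpr h1
      simp [h1, h2]
  have hH : ∑ k ∈ range (m+1), h k = -binomialEntropy m + 1 := by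
    rw [hh_def]
    rw [Finset.sum_add_distrib, hsum, binomialEntropy]
    simp [ha_def]
  have htot : ∑ k ∈ range (m + 1 + 1),
      (if Even k then ((m+1).choose k : ℝ) / 2 ^ ((m+1) - 1) else 0) *
        Real.logb 2 (if Even k then ((m+1).choose k : ℝ) / 2 ^ ((m+1) - 1) else 0)
      ≤ -binomialEntropy m + 1 := by
    calc _ ≤ _ := hmain
    _ = _ := hsplit
    _ = ∑ i ∈ range (m+1), ((if Even (i+1) then h i else 0) + (if Even i then h i else 0)) := by
        rw [Finset.sum_add_distrib, hS1, hS2, Finset.sum_add_distrib]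
    _ = ∑ i ∈ range (m+1), h i := hcomb
    _ = -binomialEntropy m + 1 := hH
  simp only [Nat.add_sub_cancel] at htot
  rw [ge_iff_le, binEvenEntropy]
  simp only [Nat.add_sub_cancel]
  linarith
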